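/- Myopic maximization achieves a (1-ν) resilient approximation on a uniform matroid: let f : 2^Ω → ℝ be normalized, monotone, submodular with curvature ν, let k ≥ α be naturals, and let A^sol be a set of k elements of Ω with the k largest singleton values f({x}) (i.e., f({a}) ≥ f({b}) for all a ∈ A^sol and b ∉ A^sol). Then min_{B ⊆ A^sol, |B| ≤ α} f(A^sol \ B) ≥ (1-ν) · max_{|A| ≤ k} min_{B ⊆ A, |B| ≤ α} f(A \ B). -/

import Mathlib

/-!
Write `w x = f {x}` and `γ = 1 - ν`. Submodularity makes `f` subadditive, so `f S ≤ ∑_{x∈S} w x`,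
while the curvature bound gives every element a marginal gain of at least `γ w x`, so
`γ ∑_{x∈S} w x ≤ f S`. Hence the resilient value of any set under `f` is sandwiched between `γ`
times and `1` times its resilient value under the modular function `∑ w`. For a modular function
the set of the `k` heaviest elements is an optimal resilient choice, by an exchange argument.
-/

open Finset

noncomputable def resVal {Ω : Type*} [DecidableEq Ω] (α : ℕ)
    (f : Finset Ω → ℝ) (A : Finset Ω) : ℝ :=
  (A.powerset.filter (fun B => B.card ≤ α)).inf' ⟨∅, by simp⟩ (fun B => f (A \ B))

theorem Finset.sum_le_sum_of_card_le_of_forall_sdiff_le {ι M : Type*} [DecidableEq ι]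
    [AddCommMonoid M] [LinearOrder M] [IsOrderedAddMonoid M] (w : ι → M)
    {s t : Finset ι} (hcard : s.card ≤ t.card)
    (hle : ∀ x ∈ s \ t, ∀ y ∈ t \ s, w x ≤ w y) (hnonneg : ∀ y ∈ t \ s, 0 ≤ w y) :
    ∑ x ∈ s, w x ≤ ∑ y ∈ t, w y := by
  rw [← sum_inter_add_sum_sdiff s t, ← sum_inter_add_sum_sdiff t s, inter_comm]
  gcongr 1
  have hcard' := card_sdiff_le_card_sdiff_iff.mpr hcard
  rcases (s \ t).eq_empty_or_nonempty with hst | hst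
  · simpa [hst] using sum_nonneg hnonneg
  have hts : (t \ s).Nonempty := card_pos.mp ((card_pos.mpr hst).trans_le hcard')
  obtain ⟨y₀, hy₀, hmin⟩ := exists_min_image (t \ s) w hts
  calc ∑ x ∈ s \ t, w x ≤ (s \ t).card • w y₀ := sum_le_card_nsmul _ _ _ (hle · · y₀ hy₀)
    _ ≤ (t \ s).card • w y₀ := nsmul_le_nsmul_left (hnonneg y₀ hy₀) hcard'
    _ ≤ ∑ y ∈ t \ s, w y := card_nsmul_le_sum _ _ _ hmin

section resVal

variable {Ω : Type*} [DecidableEq Ω] {α : ℕ} {f g : Finset Ω → ℝ} {A B : Finset Ω}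

theorem resVal_le (hBA : B ⊆ A) (hB : B.card ≤ α) : resVal α f A ≤ f (A \ B) :=
  inf'_le _ (mem_filter.mpr ⟨mem_powerset.mpr hBA, hB⟩)

theorem exists_resVal_eq (α : ℕ) (f : Finset Ω → ℝ) (A : Finset Ω) :
    ∃ B ⊆ A, B.card ≤ α ∧ resVal α f A = f (A \ B) := by
  obtain ⟨B, hB, heq⟩ := exists_mem_eq_inf' (⟨∅, by simp⟩ :
    (A.powerset.filter (fun B => B.card ≤ α)).Nonempty) (fun B => f (A \ B))
  rw [mem_filter, mem_powerset] at hB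
  exact ⟨B, hB.1, hB.2, heq⟩

theorem resVal_mono (h : ∀ S, f S ≤ g S) : resVal α f A ≤ resVal α g A :=
  le_inf' _ _ fun _ hB => (inf'_le _ hB).trans (h _)

theorem mul_resVal_le {c : ℝ} (hc : 0 ≤ c) (h : ∀ S, c * g S ≤ f S) :
    c * resVal α g A ≤ resVal α f A :=
  le_inf' _ _ fun _ hB => (mul_le_mul_of_nonneg_left (inf'_le _ hB) hc).trans (h _)

theorem resVal_sum_le_resVal_sum_of_heaviest (w : Ω → ℝ) (hw : ∀ x, 0 ≤ w x) {Asol : Finset Ω}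
    (hgreedy : ∀ a ∈ Asol, ∀ b ∉ Asol, w b ≤ w a) (hA : A.card ≤ Asol.card) :
    resVal α (fun S => ∑ x ∈ S, w x) A ≤ resVal α (fun S => ∑ x ∈ S, w x) Asol := by
  obtain ⟨Bsol, hBsol, hBsol_card, hsol⟩ := exists_resVal_eq α (fun S => ∑ x ∈ S, w x) Asol
  rw [hsol]
  -- Remove from `A` what the adversary removes from `Asol`, then as many elements outside `Asol`
  -- as the budget allows.
  set P := A ∩ Bsol
  set X := A \ Asol
  obtain ⟨C, hCX, hC⟩ := exists_subset_card_eq (min_le_right (α - P.card) X.card)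
  have hP : P.card ≤ Bsol.card := card_le_card inter_subset_right
  have hBA : P ∪ C ⊆ A := union_subset inter_subset_left (hCX.trans sdiff_subset)
  have hPC : Disjoint P C := disjoint_left.mpr fun x hxP hxC =>
    (mem_sdiff.mp (hCX hxC)).2 (hBsol (mem_inter.mp hxP).2)
  have hB_card : (P ∪ C).card ≤ α := by
    rw [card_union_of_disjoint hPC, hC]
    omega
  have hkept : ∀ x ∈ A \ (P ∪ C), x ∈ Asol → x ∈ Asol \ Bsol := fun x hx hxsol =>
    mem_sdiff.mpr ⟨hxsol, fun hxB => (mem_sdiff.mp hx).2 (mem_union_left _ (mem_inter.mpr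
      ⟨(mem_sdiff.mp hx).1, hxB⟩))⟩
  refine (resVal_le hBA hB_card).trans (sum_le_sum_of_card_le_of_forall_sdiff_le w ?_ ?_
    fun y _ => hw y)
  · rcases le_total X.card (α - P.card) with hX | hX
    · refine card_le_card fun x hx => hkept x hx (by_contra fun hxsol => ?_)
      have hxC : x ∈ C := by
        rw [eq_of_subset_of_card_le hCX (by omega)]
        exact mem_sdiff.mpr ⟨(mem_sdiff.mp hx).1, hxsol⟩
      exact (mem_sdiff.mp hx).2 (mem_union_right _ hxC)
    · rw [card_sdiff_of_subset hBA, card_union_of_disjoint hPC, hC, min_eq_left hX,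
        card_sdiff_of_subset hBsol]
      omega
  · intro x hx y hy
    have hxsol : x ∉ Asol := fun hxsol => (mem_sdiff.mp hx).2 (hkept x (mem_sdiff.mp hx).1 hxsol)
    exact hgreedy y (mem_sdiff.mp (mem_sdiff.mp hy).1).1 x hxsol

end resVal

section Submodular

variable {Ω : Type*} [DecidableEq Ω] {f : Finset Ω → ℝ}

theorem le_sum_singleton_of_submodular (hnorm : f ∅ = 0)
    (hsub : ∀ A B, f (A ∪ B) + f (A ∩ B) ≤ f A + f B) (S : Finset Ω) :
    f S ≤ ∑ x ∈ S, f {x} := by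
  induction S using Finset.induction_on with
  | empty => simp [hnorm]
  | insert x s hx ih =>
    have h := hsub s {x}
    rw [union_singleton, inter_singleton_of_notMem hx, hnorm] at h
    rw [sum_insert hx]
    linarith

variable [Fintype Ω] {γ : ℝ} (hsub : ∀ A B, f (A ∪ B) + f (A ∩ B) ≤ f A + f B)
  (hγ : ∀ x, γ * f {x} ≤ f univ - f (univ \ {x}))
include hsub hγ

theorem mul_singleton_add_erase_le {S : Finset Ω} {x : Ω} (hx : x ∈ S) :
    γ * f {x} + f (S.erase x) ≤ f S := by
  have h := hsub S (univ \ {x})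
  have hunion : S ∪ univ \ {x} = univ := eq_univ_of_forall fun y => by
    rcases eq_or_ne y x with rfl | hy <;> simp [*]
  have hinter : S ∩ (univ \ {x}) = S.erase x := by ext; simp [and_comm]
  rw [hunion, hinter] at h
  linarith [hγ x]

theorem mul_sum_singleton_le (hnorm : f ∅ = 0) (S : Finset Ω) :
    γ * ∑ x ∈ S, f {x} ≤ f S := by
  induction S using Finset.induction_on with
  | empty => simp [hnorm]
  | insert x s hx ih =>
    have h := mul_singleton_add_erase_le hsub hγ (mem_insert_self x s)
    rw [erase_insert hx] at h
    rw [sum_insert hx]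
    linarith

end Submodular

theorem stmt5 {Ω : Type*} [Fintype Ω] [DecidableEq Ω] [Nonempty Ω]
    (f : Finset Ω → ℝ)
    (hnorm : f ∅ = 0)
    (hmono : ∀ A B : Finset Ω, A ⊆ B → f A ≤ f B)
    (hsub : ∀ A B : Finset Ω, f A + f B ≥ f (A ∪ B) + f (A ∩ B))
    (hpos : ∀ x : Ω, 0 < f {x})
    (ν : ℝ)
    (hν : ν = 1 - (univ : Finset Ω).inf' univ_nonempty
      (fun x => (f univ - f (univ \ {x})) / f {x}))
    (α k : ℕ)
    (Asol : Finset Ω) (hcard : Asol.card = k)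
    (hgreedy : ∀ a ∈ Asol, ∀ b ∉ Asol, f {a} ≥ f {b}) :
    resVal α f Asol ≥
      (1 - ν) * ((univ : Finset Ω).powerset.filter (fun A => A.card ≤ k)).sup'
        ⟨∅, by simp⟩ (fun A => resVal α f A) := by
  have hγ : 1 - ν = univ.inf' univ_nonempty (fun x => (f univ - f (univ \ {x})) / f {x}) := by
    rw [hν]; ring
  have hγ_nonneg : 0 ≤ 1 - ν := hγ ▸ le_inf' _ _ fun x _ =>
    div_nonneg (sub_nonneg.mpr (hmono _ _ sdiff_subset)) (hpos x).le
  have hmarginal (x : Ω) : (1 - ν) * f {x} ≤ f univ - f (univ \ {x}) :=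
    (le_div_iff₀ (hpos x)).mp (hγ ▸ inf'_le _ (mem_univ x))
  calc (1 - ν) * _ ≤ (1 - ν) * resVal α (fun S => ∑ x ∈ S, f {x}) Asol := by
        refine mul_le_mul_of_nonneg_left (sup'_le _ _ fun A hA => ?_) hγ_nonneg
        refine (resVal_mono (le_sum_singleton_of_submodular hnorm hsub)).trans
          (resVal_sum_le_resVal_sum_of_heaviest _ (fun x => (hpos x).le) hgreedy ?_)
        exact hcard ▸ (mem_filter.mp hA).2
    _ ≤ resVal α f Asol := mul_resVal_le hγ_nonneg (mul_sum_singleton_le hsub hmarginal hnorm)
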